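/- arXiv:0805.2479 — 3 statements merged into one kernel-verified Lean document; each statement's English description precedes it below -/
import Mathlib

section
/- Let Φ_0 be the cdf of N(0,σ²) and F(x) = (1-p)Φ_0(x) + pΦ_1(x) where Φ_1 is the cdf of N(0,σ²+τ²), with p ∈ (0,1), σ, τ > 0, α ∈ (0,1). Then the function g(x) = (1-p)(1-Φ_0(x))/(1-F(x)) satisfies g(x) → 0 as x → ∞; consequently the set {x > 0 : g(x) < α} is nonempty and c_fdr = inf{x > 0 : g(x) < α} is finite. -/
/-!
Writing `T₀, T₁` for the Gaussian tails `1 - Φ₀, 1 - Φ₁`, we have `1 - F = (1-p) T₀ + p T₁`, so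
`g = r / (r + 1)` with `r = (1-p) T₀ / (p T₁)`. Since `σ² < σ² + τ²`, the `N(0,σ²)` density is
`o` of the `N(0,σ²+τ²)` density at `+∞`; integrating this comparison over `(x, ∞)` gives
`T₀ = o(T₁)`, hence `r → 0` and `g → 0`.
-/

open Real Set Filter MeasureTheory Asymptotics ProbabilityTheory Topology NNReal

theorem Asymptotics.IsLittleO.integral_Ioi {f g : ℝ → ℝ} {a : ℝ} (hfg : f =o[atTop] g)
    (hg : IntegrableOn g (Ioi a)) (hg_nonneg : ∀ᶠ t in atTop, 0 ≤ g t) :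
    (fun x ↦ ∫ t in Ioi x, f t) =o[atTop] fun x ↦ ∫ t in Ioi x, g t := by
  refine IsLittleO.of_bound fun ε hε ↦ ?_
  obtain ⟨b, hb⟩ := eventually_atTop.1 ((hfg.bound hε).and hg_nonneg)
  filter_upwards [eventually_ge_atTop (max a b)] with x hx
  have hgx : IntegrableOn g (Ioi x) := hg.mono_set (Ioi_subset_Ioi (le_of_max_le_left hx))
  have hb' : ∀ t ∈ Ioi x, ‖f t‖ ≤ ε * ‖g t‖ ∧ 0 ≤ g t :=
    fun t ht ↦ hb t ((le_of_max_le_right hx).trans ht.out.le)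
  calc ‖∫ t in Ioi x, f t‖ ≤ ∫ t in Ioi x, ε * g t :=
        norm_integral_le_of_norm_le (hgx.const_mul ε) <| (ae_restrict_iff' measurableSet_Ioi).2 <|
          .of_forall fun t ht ↦ by simpa [abs_of_nonneg (hb' t ht).2] using (hb' t ht).1
    _ = ε * ‖∫ t in Ioi x, g t‖ := by
        rw [integral_const_mul, Real.norm_of_nonneg <|
          setIntegral_nonneg_of_ae_restrict <| (ae_restrict_iff' measurableSet_Ioi).2 <|
            .of_forall fun t ht ↦ (hb' t ht).2]

theorem Asymptotics.IsLittleO.tendsto_mul_div_mul_add_mul {u w : ℝ → ℝ} (huw : u =o[atTop] w)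
    (a : ℝ) {b : ℝ} (hb : b ≠ 0) : Tendsto (fun x ↦ a * u x / (a * u x + b * w x)) atTop (𝓝 0) := by
  set r : ℝ → ℝ := fun x ↦ a / b * (u x / w x)
  have hr : Tendsto r atTop (𝓝 0) := by
    simpa using huw.tendsto_div_nhds_zero.const_mul (a / b)
  have hlim : Tendsto (fun x ↦ r x / (r x + 1)) atTop (𝓝 0) := by
    have h := hr.div (hr.add_const 1) (by norm_num : (0 : ℝ) + 1 ≠ 0)
    rwa [zero_div] at h
  -- where `w x = 0`, little-o forces `u x = 0`, and both sides are `0` by `x / 0 = 0`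
  refine hlim.congr' ?_
  filter_upwards [huw.isBigO.eq_zero_imp] with x hx
  by_cases hw : w x = 0
  · simp [r, hw, hx hw]
  · simp only [r]
    field_simp

namespace ProbabilityTheory

theorem gaussianPDFReal_zero_toNNReal {s v : ℝ} (hs : 0 ≤ s) (hsv : s ^ 2 = v) (t : ℝ) :
    gaussianPDFReal 0 v.toNNReal t = 1 / (s * √(2 * π)) * rexp (-(t ^ 2) / (2 * v)) := by
  have hv : 0 ≤ v := hsv ▸ sq_nonneg s
  rw [gaussianPDFReal, Real.coe_toNNReal v hv, sub_zero, ← hsv, mul_comm (2 * π),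
    Real.sqrt_mul (sq_nonneg s), Real.sqrt_sq hs, one_div]

theorem one_sub_integral_Iic_gaussianPDFReal (μ : ℝ) {v : ℝ≥0} (hv : v ≠ 0) (x : ℝ) :
    1 - ∫ t in Iic x, gaussianPDFReal μ v t = ∫ t in Ioi x, gaussianPDFReal μ v t := by
  rw [← integral_gaussianPDFReal_eq_one μ hv, ← intervalIntegral.integral_Iic_add_Ioi
    (integrable_gaussianPDFReal μ v).integrableOn (integrable_gaussianPDFReal μ v).integrableOn]
  ring

theorem gaussianPDFReal_isLittleO_of_lt {μ : ℝ} {v₀ v₁ : ℝ≥0} (hv : v₀ < v₁) :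
    gaussianPDFReal μ v₀ =o[atTop] gaussianPDFReal μ v₁ := by
  rcases eq_or_ne v₀ 0 with rfl | hv₀
  · rw [gaussianPDFReal_zero_var]
    exact isLittleO_zero _ _
  have hv₀ : (0 : ℝ) < v₀ := NNReal.coe_pos.2 (pos_iff_ne_zero.2 hv₀)
  have hv₁ : (0 : ℝ) < v₁ := hv₀.trans hv
  have hc : 0 < 1 / (2 * (v₀ : ℝ)) - 1 / (2 * v₁) := by
    rw [sub_pos]
    gcongr
  have hexp : (fun x ↦ rexp (-(x - μ) ^ 2 / (2 * v₀))) =o[atTop]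
      fun x ↦ rexp (-(x - μ) ^ 2 / (2 * v₁)) := by
    rw [isLittleO_exp_comp_exp_comp]
    have h := (tendsto_pow_atTop two_ne_zero).comp
      (tendsto_atTop_add_const_right _ (-μ) tendsto_id)
    refine (h.const_mul_atTop hc).congr fun x ↦ ?_
    simp only [Function.comp, id]
    ring
  simp only [gaussianPDFReal_def]
  refine (hexp.const_mul_left _).const_mul_right ?_
  positivity

end ProbabilityTheory

/-- the BFDR of the one-sided threshold rule,
`g(x) = (1-p)(1-Φ₀(x))/(1-F(x))`, tends to 0 as `x → ∞`; hence the set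
`{x > 0 : g(x) < α}` is nonempty (and bounded below), so `c_fdr = inf{x > 0 : g(x) < α}`
is a (finite) real number. -/
theorem bfdr_threshold_exists
    (p σ τ α : ℝ) (hp : p ∈ Ioo (0:ℝ) 1) (hσ : 0 < σ) (hτ : 0 < τ) (hα : α ∈ Ioo (0:ℝ) 1)
    (Φ0 Φ1 F g : ℝ → ℝ)
    (hΦ0 : Φ0 = fun x => ∫ t in Iic x,
      (1 / (σ * Real.sqrt (2 * π))) * Real.exp (-(t ^ 2) / (2 * σ ^ 2)))
    (hΦ1 : Φ1 = fun x => ∫ t in Iic x,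
      (1 / (Real.sqrt (σ ^ 2 + τ ^ 2) * Real.sqrt (2 * π))) *
        Real.exp (-(t ^ 2) / (2 * (σ ^ 2 + τ ^ 2))))
    (hF : F = fun x => (1 - p) * Φ0 x + p * Φ1 x)
    (hg : g = fun x => (1 - p) * (1 - Φ0 x) / (1 - F x)) :
    Tendsto g atTop (nhds 0) ∧
      {x : ℝ | 0 < x ∧ g x < α}.Nonempty ∧
      BddBelow {x : ℝ | 0 < x ∧ g x < α} := by
  have hv₀ : (σ ^ 2).toNNReal ≠ 0 := by positivity
  have hv₁ : (σ ^ 2 + τ ^ 2).toNNReal ≠ 0 := by positivity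
  have hv : (σ ^ 2).toNNReal < (σ ^ 2 + τ ^ 2).toNNReal :=
    (Real.toNNReal_lt_toNNReal_iff (by positivity)).2 (by linarith [sq_pos_of_pos hτ])
  have hT₀ (x : ℝ) : 1 - Φ0 x = ∫ t in Ioi x, gaussianPDFReal 0 (σ ^ 2).toNNReal t := by
    simp_rw [hΦ0, ← gaussianPDFReal_zero_toNNReal hσ.le rfl,
      one_sub_integral_Iic_gaussianPDFReal 0 hv₀]
  have hT₁ (x : ℝ) : 1 - Φ1 x = ∫ t in Ioi x, gaussianPDFReal 0 (σ ^ 2 + τ ^ 2).toNNReal t := by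
    have hs : √(σ ^ 2 + τ ^ 2) ^ 2 = σ ^ 2 + τ ^ 2 := sq_sqrt (by positivity)
    simp_rw [hΦ1, ← gaussianPDFReal_zero_toNNReal (sqrt_nonneg _) hs,
      one_sub_integral_Iic_gaussianPDFReal 0 hv₁]
  have hg' : g = fun x ↦ (1 - p) * (1 - Φ0 x) / ((1 - p) * (1 - Φ0 x) + p * (1 - Φ1 x)) := by
    rw [hg, hF]
    ext x
    congr 1
    ring
  have hlim : Tendsto g atTop (𝓝 0) := by
    simp only [hg', hT₀, hT₁]
    have htails := (gaussianPDFReal_isLittleO_of_lt (μ := 0) hv).integral_Ioi (a := 0)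
      (integrable_gaussianPDFReal 0 _).integrableOn (.of_forall (gaussianPDFReal_nonneg 0 _))
    exact htails.tendsto_mul_div_mul_add_mul (1 - p) hp.1.ne'
  obtain ⟨x, hgx, hx⟩ := ((hlim.eventually_lt_const hα.1).and (eventually_gt_atTop 0)).exists
  exact ⟨hlim, ⟨x, hx, hgx⟩, ⟨0, fun x hx ↦ hx.1.le⟩⟩
end

section
/- (Storey's Bayesian interpretation of pFDR for a single threshold rule under the i.i.d. two-component mixture model) If (X_i, γ_i), i = 1,…,m, are i.i.d. with P(γ_i = 1) = p ∈ (0,1), X_i | γ_i = 0 ∼ f_0, X_i | γ_i = 1 ∼ f_A, and a hypothesis is rejected when X_i ∈ Γ for a fixed measurable set Γ with P(X_1 ∈ Γ) > 0, then E[V/R | R > 0] = P(γ_1 = 0 | X_1 ∈ Γ), where R = #{i : X_i ∈ Γ} and V = #{i : X_i ∈ Γ, γ_i = 0}. -/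
open MeasureTheory ProbabilityTheory Set

/-!
With the convention `x / 0 = 0`, `V / R = ∑ᵢ 1{Xᵢ ∈ Γ, γᵢ = 0} / (1 + Rᵢ)`, where `Rᵢ` counts the
rejections among the indices other than `i`. As `Rᵢ` is independent of `(Xᵢ, γᵢ)`,
`E[V / R] = P(X₁ ∈ Γ, γ₁ = 0) · C` with `C = ∑ᵢ E[1 / (1 + Rᵢ)]`, and the same computation for
`R / R` gives `P(R > 0) = P(X₁ ∈ Γ) · C`. The quotient of the two is the posterior probability.
-/

noncomputable def countHits {Ω ι β : Type*} (F : ι → Ω → β) (s : Set β) (I : Finset ι)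
    (ω : Ω) : ℝ :=
  ∑ i ∈ I, s.indicator 1 (F i ω)

section Counting

variable {Ω ι β : Type*} {F : ι → Ω → β} {s A B : Set β} {I : Finset ι}

lemma countHits_nonneg (ω : Ω) : 0 ≤ countHits F s I ω :=
  Finset.sum_nonneg fun _ _ => indicator_nonneg (fun _ _ => zero_le_one) _

lemma countHits_div_self (ω : Ω) :
    countHits F s I ω / countHits F s I ω = {ω | 0 < countHits F s I ω}.indicator 1 ω := by
  rcases (countHits_nonneg (F := F) (s := s) (I := I) ω).eq_or_lt with h | h
  · simp [← h]
  · simp [h, h.ne']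

variable [Fintype ι] [DecidableEq ι]

lemma countHits_univ_eq_add (i : ι) (ω : Ω) :
    countHits F s Finset.univ ω = s.indicator 1 (F i ω) + countHits F s {i}ᶜ ω :=
  Fintype.sum_eq_add_sum_compl i _

lemma countHits_div_countHits (hAB : A ⊆ B) (ω : Ω) :
    countHits F A Finset.univ ω / countHits F B Finset.univ ω
      = ∑ i, A.indicator 1 (F i ω) * (1 + countHits F B {i}ᶜ ω)⁻¹ := by
  rw [countHits, Finset.sum_div]
  refine Finset.sum_congr rfl fun i _ => ?_
  by_cases hi : F i ω ∈ A
  · rw [countHits_univ_eq_add i, indicator_of_mem (hAB hi), indicator_of_mem hi, div_eq_mul_inv]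
    rfl
  · simp [indicator_of_notMem hi]

end Counting

section Independence

variable {Ω ι β : Type*} [MeasurableSpace Ω] [MeasurableSpace β] {μ : Measure Ω}
  {F : ι → Ω → β} {s A B : Set β}

lemma measurable_countHits (hF : ∀ i, Measurable (F i)) (hs : MeasurableSet s) (I : Finset ι) :
    Measurable (countHits F s I) :=
  Finset.measurable_fun_sum I fun i _ => (measurable_one.indicator hs).comp (hF i)

variable [Fintype ι] [DecidableEq ι]

lemma indepFun_countHits_compl (hF : ∀ i, Measurable (F i)) (hindep : iIndepFun F μ)
    (hB : MeasurableSet B) (i : ι) : IndepFun (F i) (countHits F B {i}ᶜ) μ := by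
  have hsum : countHits F B {i}ᶜ = (fun v : ({i}ᶜ : Finset ι) → β =>
      ∑ j, B.indicator (1 : β → ℝ) (v j)) ∘ fun ω j => F j ω :=
    funext fun ω => (Finset.sum_coe_sort _ _).symm
  rw [hsum]
  exact (hindep.indepFun_finset {i} {i}ᶜ disjoint_compl_right hF).comp
    (measurable_pi_apply ⟨i, Finset.mem_singleton_self i⟩)
    (Finset.measurable_fun_sum _ fun j _ =>
      (measurable_one.indicator hB : Measurable (B.indicator (1 : β → ℝ))).comp
        (measurable_pi_apply j))

lemma integral_indicator_mul_inv_one_add_countHits (hF : ∀ i, Measurable (F i))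
    (hindep : iIndepFun F μ) (hA : MeasurableSet A) (hB : MeasurableSet B) (i : ι) :
    ∫ ω, A.indicator 1 (F i ω) * (1 + countHits F B {i}ᶜ ω)⁻¹ ∂μ
      = μ.real (F i ⁻¹' A) * ∫ ω, (1 + countHits F B {i}ᶜ ω)⁻¹ ∂μ := by
  have h := (indepFun_countHits_compl hF hindep hB i).comp
    (measurable_one.indicator hA : Measurable (A.indicator (1 : β → ℝ)))
    ((measurable_const.add measurable_id).inv : Measurable fun x : ℝ => (1 + x)⁻¹)
  rw [← integral_indicator_one ((hF i) hA)]
  exact h.integral_mul_eq_mul_integral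
    ((measurable_one.indicator hA).comp (hF i)).aestronglyMeasurable
    (((measurable_countHits hF hB _).const_add 1).inv).aestronglyMeasurable

lemma integrable_indicator_mul_inv_one_add_countHits [IsFiniteMeasure μ]
    (hF : ∀ i, Measurable (F i)) (hA : MeasurableSet A) (hB : MeasurableSet B) (i : ι) :
    Integrable (fun ω => A.indicator 1 (F i ω) * (1 + countHits F B {i}ᶜ ω)⁻¹) μ := by
  refine Integrable.of_bound (((measurable_one.indicator hA).comp (hF i)).mul
    ((measurable_countHits hF hB _).const_add 1).inv).aestronglyMeasurable 1
    (ae_of_all _ fun ω => ?_)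
  have h1 : 1 ≤ 1 + countHits F B {i}ᶜ ω := le_add_of_nonneg_right (countHits_nonneg ω)
  rw [norm_mul, norm_inv, Real.norm_of_nonneg (zero_le_one.trans h1)]
  exact mul_le_one₀ (norm_indicator_le_norm_self _ _ |>.trans norm_one.le)
    (inv_nonneg.2 (zero_le_one.trans h1)) (inv_le_one_of_one_le₀ h1)

lemma integral_countHits_div_countHits [IsFiniteMeasure μ] (hF : ∀ i, Measurable (F i))
    (hindep : iIndepFun F μ) {i₀ : ι} (hident : ∀ i, IdentDistrib (F i) (F i₀) μ μ)
    (hA : MeasurableSet A) (hB : MeasurableSet B) (hAB : A ⊆ B) :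
    ∫ ω, countHits F A Finset.univ ω / countHits F B Finset.univ ω ∂μ
      = μ.real (F i₀ ⁻¹' A) * ∑ i, ∫ ω, (1 + countHits F B {i}ᶜ ω)⁻¹ ∂μ := by
  simp_rw [countHits_div_countHits hAB]
  rw [integral_finsetSum _ fun i _ =>
    integrable_indicator_mul_inv_one_add_countHits hF hA hB i, Finset.mul_sum]
  refine Finset.sum_congr rfl fun i _ => ?_
  rw [integral_indicator_mul_inv_one_add_countHits hF hindep hA hB, measureReal_def,
    (hident i).measure_mem_eq hA, measureReal_def]

theorem integral_countHits_div_countHits_cond [IsFiniteMeasure μ] (hF : ∀ i, Measurable (F i))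
    (hindep : iIndepFun F μ) {i₀ : ι} (hident : ∀ i, IdentDistrib (F i) (F i₀) μ μ)
    (hA : MeasurableSet A) (hB : MeasurableSet B) (hAB : A ⊆ B) :
    ∫ ω, countHits F A Finset.univ ω / countHits F B Finset.univ ω
        ∂μ[|{ω | 0 < countHits F B Finset.univ ω}]
      = (μ[F i₀ ⁻¹' A | F i₀ ⁻¹' B]).toReal := by
  classical
  set T := {ω | 0 < countHits F B Finset.univ ω}
  set C := ∑ i, ∫ ω, (1 + countHits F B {i}ᶜ ω)⁻¹ ∂μ
  have hT : MeasurableSet T := measurableSet_lt measurable_const (measurable_countHits hF hB _)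
  have hμT : μ.real T = μ.real (F i₀ ⁻¹' B) * C := by
    rw [← integral_indicator_one hT, ← integral_countHits_div_countHits hF hindep hident hB hB
      subset_rfl]
    simp_rw [countHits_div_self]
    rfl
  have hsub : F i₀ ⁻¹' B ⊆ T := fun ω hω => by
    show 0 < countHits F B Finset.univ ω
    rw [countHits_univ_eq_add i₀, indicator_of_mem (show F i₀ ω ∈ B from hω), Pi.one_apply]
    linarith [countHits_nonneg (F := F) (s := B) (I := {i₀}ᶜ) ω]
  have hLHS : ∫ ω, countHits F A Finset.univ ω / countHits F B Finset.univ ω ∂μ[|T]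
      = (μ.real T)⁻¹ * (μ.real (F i₀ ⁻¹' A) * C) := by
    rw [ProbabilityTheory.cond, integral_smul_measure, ENNReal.toReal_inv, ← measureReal_def,
      smul_eq_mul, setIntegral_eq_integral_of_forall_compl_eq_zero fun ω hω => ?_,
      integral_countHits_div_countHits hF hindep hident hA hB hAB]
    rw [le_antisymm (not_lt.1 hω) (countHits_nonneg ω), div_zero]
  rw [hLHS, cond_apply ((hF i₀) hB), ENNReal.toReal_mul, ENNReal.toReal_inv, ← measureReal_def,
    ← measureReal_def, inter_eq_right.2 (preimage_mono hAB), hμT]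
  rcases eq_or_ne C 0 with hC | hC
  · -- `μ T = 0` forces `P(F i₀ ∈ B) = 0`, and then both sides are `0`.
    have hB0 : μ.real (F i₀ ⁻¹' B) = 0 :=
      le_antisymm (by simpa [hμT, hC] using measureReal_mono (μ := μ) hsub) measureReal_nonneg
    simp [hC, hB0]
  · rw [mul_inv, mul_left_comm, mul_assoc, inv_mul_cancel₀ hC, mul_one, mul_comm]

end Independence

theorem pFDR_eq_posterior_null_general
    {Ω : Type*} [MeasurableSpace Ω] (μ : Measure Ω) [IsProbabilityMeasure μ]
    (m : ℕ) (hm : 0 < m)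
    (X : Fin m → Ω → ℝ) (γ : Fin m → Ω → Bool)
    (hX : ∀ i, Measurable (X i)) (hγ : ∀ i, Measurable (γ i))
    (hiid_indep : iIndepFun (fun i ω => (X i ω, γ i ω)) μ)
    (hiid_ident : ∀ i, IdentDistrib (fun ω => (X i ω, γ i ω)) (fun ω => (X ⟨0, hm⟩ ω, γ ⟨0, hm⟩ ω)) μ μ)
    (Γ : Set ℝ) (hΓ : MeasurableSet Γ)
    (R V : Ω → ℝ)
    (hRdef : R = fun ω => ∑ i : Fin m, Γ.indicator (fun _ => (1:ℝ)) (X i ω))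
    (hVdef : V = fun ω => ∑ i : Fin m,
      Γ.indicator (fun _ => (1:ℝ)) (X i ω) * (if γ i ω = false then 1 else 0))
    (ratio : Ω → ℝ)
    (hratio : ratio = fun ω => if R ω = 0 then 0 else V ω / R ω) :
    ∫ ω, ratio ω ∂(ProbabilityTheory.cond μ {ω | 0 < R ω})
      = ((ProbabilityTheory.cond μ {ω | X ⟨0, hm⟩ ω ∈ Γ}) {ω | γ ⟨0, hm⟩ ω = false}).toReal := by
  set F : Fin m → Ω → ℝ × Bool := fun i ω => (X i ω, γ i ω)
  have hR : R = countHits F (Γ ×ˢ univ) Finset.univ := by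
    funext ω
    simp only [hRdef, countHits, F, indicator_prod_one, indicator_univ, Pi.one_apply, mul_one]
    rfl
  have hV : V = countHits F (Γ ×ˢ {false}) Finset.univ := by
    funext ω
    simp only [hVdef, countHits, F, indicator_prod_one, indicator_apply (s := ({false} : Set Bool)),
      mem_singleton_iff, Pi.one_apply]
    rfl
  have hratio_div : ratio = fun ω => V ω / R ω := by
    rw [hratio]
    funext ω
    split_ifs with h <;> simp [h]
  have hrejected : {ω | X ⟨0, hm⟩ ω ∈ Γ} = F ⟨0, hm⟩ ⁻¹' (Γ ×ˢ univ) := by ext; simp [F]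
  have hfalse : {ω | X ⟨0, hm⟩ ω ∈ Γ} ∩ {ω | γ ⟨0, hm⟩ ω = false}
      = F ⟨0, hm⟩ ⁻¹' (Γ ×ˢ {false}) := by ext; simp [F]
  rw [← cond_inter_self (s := {ω | X ⟨0, hm⟩ ω ∈ Γ}) ((hX _) hΓ), hfalse, hrejected, hratio_div,
    hR, hV]
  exact integral_countHits_div_countHits_cond (fun i => (hX i).prodMk (hγ i)) hiid_indep
    hiid_ident (hΓ.prod (measurableSet_singleton false)) (hΓ.prod MeasurableSet.univ)
    (prod_mono subset_rfl (subset_univ _))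

/-- Storey: under the i.i.d. two-component mixture model, the pFDR of the
fixed rejection region `Γ` equals the posterior probability of the null given rejection:
`E[V/R | R > 0] = P(γ₁ = 0 | X₁ ∈ Γ)`. -/
theorem pFDR_eq_posterior_null
    {Ω : Type*} [MeasurableSpace Ω] (μ : Measure Ω) [IsProbabilityMeasure μ]
    (m : ℕ) (hm : 0 < m) (p : ℝ) (hp : p ∈ Ioo (0:ℝ) 1)
    (X : Fin m → Ω → ℝ) (γ : Fin m → Ω → Bool)
    (hX : ∀ i, Measurable (X i)) (hγ : ∀ i, Measurable (γ i))
    (hiid_indep : iIndepFun (fun i ω => (X i ω, γ i ω)) μ)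
    (hiid_ident : ∀ i, IdentDistrib (fun ω => (X i ω, γ i ω)) (fun ω => (X ⟨0, hm⟩ ω, γ ⟨0, hm⟩ ω)) μ μ)
    (hprior : ∀ i, (μ {ω | γ i ω = true}).toReal = p)
    (f0 fA : ℝ → ℝ) (hf0 : Measurable f0) (hfA : Measurable fA)
    (hnull : Measure.map (X ⟨0, hm⟩) (ProbabilityTheory.cond μ {ω | γ ⟨0, hm⟩ ω = false})
      = volume.withDensity (fun x => ENNReal.ofReal (f0 x)))
    (halt : Measure.map (X ⟨0, hm⟩) (ProbabilityTheory.cond μ {ω | γ ⟨0, hm⟩ ω = true})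
      = volume.withDensity (fun x => ENNReal.ofReal (fA x)))
    (Γ : Set ℝ) (hΓ : MeasurableSet Γ) (hΓpos : 0 < μ {ω | X ⟨0, hm⟩ ω ∈ Γ})
    (R V : Ω → ℝ)
    (hRdef : R = fun ω => ∑ i : Fin m, Γ.indicator (fun _ => (1:ℝ)) (X i ω))
    (hVdef : V = fun ω => ∑ i : Fin m,
      Γ.indicator (fun _ => (1:ℝ)) (X i ω) * (if γ i ω = false then 1 else 0))
    (ratio : Ω → ℝ)
    (hratio : ratio = fun ω => if R ω = 0 then 0 else V ω / R ω) :
    ∫ ω, ratio ω ∂(ProbabilityTheory.cond μ {ω | 0 < R ω})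
      = ((ProbabilityTheory.cond μ {ω | X ⟨0, hm⟩ ω ∈ Γ}) {ω | γ ⟨0, hm⟩ ω = false}).toReal :=
  pFDR_eq_posterior_null_general μ m hm X γ hX hγ hiid_indep hiid_ident Γ hΓ R V hRdef hVdef ratio
    hratio
end

section
/- (FDR of BH under independence, Benjamini–Yekutieli Theorem 5.1, special case) If all m null hypotheses are true and the p-values P_1,…,P_m are i.i.d. Uniform(0,1), then the FDR of the Benjamini–Hochberg procedure at level α equals α. -/
/-!
Benjamini–Yekutieli's argument. Let `R` be the number of BH rejections with step `c = α / m`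
and `Rᵢ` the number obtained when `Pᵢ` is forced to be rejected; `Rᵢ` is a function of the
other p-values only, hence independent of `Pᵢ`, and on `{Pᵢ ≤ k c}` we have `R = k ↔ Rᵢ = k`.
Since exactly `k` p-values lie below `k c` on `{R = k}`,
`k μ(R = k) = ∑ᵢ μ(Pᵢ ≤ k c, Rᵢ = k) = k c ∑ᵢ μ(Rᵢ = k)`.
Summing over `k ≥ 1` and using `1 ≤ Rᵢ ≤ m` gives `μ(R > 0) = m c = α`.
-/

open MeasureTheory ProbabilityTheory Set Finset

lemma Nat.findGreatest_eq_iff_of_forall_le {P Q : ℕ → Prop} [DecidablePred P] [DecidablePred Q]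
    {n k : ℕ} (hPQ : ∀ l, k ≤ l → (P l ↔ Q l)) :
    Nat.findGreatest P n = k ↔ Nat.findGreatest Q n = k := by
  simp only [Nat.findGreatest_eq_iff]
  refine and_congr_right fun _ => and_congr ?_ ?_
  · exact imp_congr_right fun _ => hPQ k le_rfl
  · exact forall_congr' fun l => forall_congr' fun hkl =>
      forall_congr' fun _ => not_congr (hPQ l hkl.le)

lemma measurable_card_filter {α β : Type*} [MeasurableSpace α] [Fintype β] {q : β → α → Prop}
    [∀ j a, Decidable (q j a)] (hq : ∀ j, MeasurableSet {a | q j a}) :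
    Measurable fun a => #{j | q j a} := by
  simp_rw [card_filter]
  exact Finset.measurable_sum _ fun j _ => Measurable.ite (hq j) measurable_const measurable_const

lemma ProbabilityTheory.iIndepFun.indepFun_of_update_invariant {Ω ι β γ : Type*}
    [MeasurableSpace Ω] {μ : Measure Ω} [mβ : MeasurableSpace β] [MeasurableSpace γ] [Nonempty β]
    [DecidableEq ι] {P : ι → Ω → β} (hP : ∀ i, Measurable (P i)) (hind : iIndepFun P μ) {i : ι}
    {F : (ι → β) → γ} (hF : Measurable F) (hFi : ∀ p x, F (Function.update p i x) = F p) :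
    IndepFun (P i) (fun ω => F (P · ω)) μ := by
  obtain ⟨b⟩ := ‹Nonempty β›
  have hsplit := indep_iSup_of_disjoint (fun j => (hP j).comap_le)
    ((iIndepFun_iff_iIndep _ _ _).mp hind) (disjoint_compl_right (a := ({i} : Set ι)))
  rw [IndepFun_iff_Indep]
  refine indep_of_indep_of_le_right (indep_of_indep_of_le_left hsplit ?_) ?_
  · exact le_iSup₂ (f := fun j (_ : j ∈ ({i} : Set ι)) => mβ.comap (P j)) i rfl
  · have hupdate : Measurable[⨆ j ∈ ({i} : Set ι)ᶜ, mβ.comap (P j)]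
        fun ω => Function.update (P · ω) i b := by
      refine @measurable_pi_lambda Ω ι (fun _ => β) (⨆ j ∈ ({i} : Set ι)ᶜ, mβ.comap (P j)) _ _
        fun j => ?_
      by_cases hj : j = i
      · subst hj
        simp only [Function.update_self]
        exact measurable_const
      · simp only [Function.update_of_ne hj]
        exact (comap_measurable (P j)).mono
          (le_iSup₂ (f := fun j (_ : j ∈ ({i} : Set ι)ᶜ) => mβ.comap (P j)) j hj) le_rfl
    have hcomp : (fun ω => F (P · ω)) = F ∘ fun ω => Function.update (P · ω) i b :=
      funext fun ω => (hFi _ _).symm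
    rw [hcomp]
    exact (hF.comp hupdate).comap_le

lemma sum_measure_inter_of_card_eq {Ω ι : Type*} [MeasurableSpace Ω] [Fintype ι] (μ : Measure Ω)
    {S : ι → Set Ω} {B : Set Ω} (hS : ∀ i, MeasurableSet (S i)) (hB : MeasurableSet B) {k : ℕ}
    [∀ i ω, Decidable (ω ∈ S i)] (hcard : ∀ ω ∈ B, #{i | ω ∈ S i} = k) :
    ∑ i, μ (S i ∩ B) = k * μ B := by
  calc ∑ i, μ (S i ∩ B) = ∑ i, ∫⁻ ω in B, (S i).indicator 1 ω ∂μ := by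
        simp_rw [lintegral_indicator_one (hS _), Measure.restrict_apply (hS _)]
    _ = ∫⁻ ω in B, ∑ i, (S i).indicator 1 ω ∂μ :=
        (lintegral_finsetSum _ fun i _ => measurable_one.indicator (hS i)).symm
    _ = ∫⁻ _ in B, (k : ENNReal) ∂μ := setLIntegral_congr_fun hB fun ω hω => by
        simp_rw [indicator_apply, Pi.one_apply, sum_boole, hcard ω hω]
    _ = k * μ B := by rw [setLIntegral_const]

lemma measure_le_of_map_eq_uniform {Ω : Type*} [MeasurableSpace Ω] {μ : Measure Ω} {X : Ω → ℝ}
    (hX : Measurable X) (hunif : μ.map X = volume.restrict (Ioo 0 1)) {t : ℝ} (ht : t ≤ 1) :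
    μ {ω | X ω ≤ t} = ENNReal.ofReal t := by
  change μ (X ⁻¹' Iic t) = _
  rw [← Measure.map_apply hX measurableSet_Iic, hunif, Measure.restrict_apply measurableSet_Iic]
  refine le_antisymm ?_ ?_
  · calc volume (Iic t ∩ Ioo 0 1) ≤ volume (Ioc 0 t) := measure_mono fun x hx => ⟨hx.2.1, hx.1⟩
      _ = ENNReal.ofReal t := by rw [Real.volume_Ioc, sub_zero]
  · calc ENNReal.ofReal t = volume (Ioo 0 t) := by rw [Real.volume_Ioo, sub_zero]
      _ ≤ volume (Iic t ∩ Ioo 0 1) :=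
        measure_mono fun x hx => ⟨hx.2.le, hx.1, hx.2.trans_le ht⟩

/-- `k ≤ #{j | p j ≤ k * c}` says that the `k`-th smallest p-value is at most `k * c`. -/
noncomputable def bhRejections {ι : Type*} [Fintype ι] (c : ℝ) (p : ι → ℝ) : ℕ :=
  Nat.findGreatest (fun k => k ≤ #{j | p j ≤ k * c}) (Fintype.card ι)

/-- `bhRejections c p` with `p i` replaced by `-∞`; it does not depend on `p i`. -/
noncomputable def bhRejectionsForced {ι : Type*} [Fintype ι] [DecidableEq ι] (c : ℝ)
    (p : ι → ℝ) (i : ι) : ℕ :=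
  Nat.findGreatest (fun k => k ≤ #{j | j ≠ i ∧ p j ≤ k * c} + 1) (Fintype.card ι)

section Combinatorics

variable {ι : Type*} [Fintype ι] {c : ℝ} {p : ι → ℝ}

lemma bhRejections_le_card : bhRejections c p ≤ Fintype.card ι :=
  Nat.findGreatest_le _

lemma card_filter_le_bhRejections_mul_eq (hc : 0 ≤ c) :
    #{j | p j ≤ bhRejections c p * c} = bhRejections c p := by
  set R := bhRejections c p
  have hspec : R ≤ #{j | p j ≤ R * c} :=
    Nat.findGreatest_spec (P := fun k => k ≤ #{j | p j ≤ k * c}) (Nat.zero_le _) (Nat.zero_le _)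
  refine le_antisymm (not_lt.mp fun hlt => ?_) hspec
  have hcard : R + 1 ≤ Fintype.card ι := hlt.trans_le (card_le_univ _)
  have hmono : #{j | p j ≤ R * c} ≤ #{j | p j ≤ ↑(R + 1) * c} := by
    refine Finset.card_le_card fun j hj => ?_
    simp only [mem_filter, Finset.mem_univ, true_and] at hj ⊢
    push_cast
    nlinarith
  exact (Nat.findGreatest_eq_iff.mp rfl).2.2 (lt_add_one R) hcard (hlt.trans_le hmono)

lemma exists_le_card_filter_mul_iff_bhRejections_pos (hc : 0 ≤ c) :
    (∃ i, p i ≤ #{j | p j ≤ p i} * c) ↔ 0 < bhRejections c p := by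
  constructor
  · rintro ⟨i, hi⟩
    have hpos : 0 < #{j | p j ≤ p i} := card_pos.mpr ⟨i, by simp⟩
    refine hpos.trans_le (Nat.le_findGreatest (card_le_univ _) ?_)
    exact Finset.card_le_card fun j hj => by
      simp only [mem_filter, Finset.mem_univ, true_and] at hj ⊢
      exact hj.trans hi
  · intro hR
    set S : Finset ι := {j | p j ≤ bhRejections c p * c}
    have hS : S.Nonempty := card_pos.mp (by rwa [card_filter_le_bhRejections_mul_eq hc])
    obtain ⟨i, hiS, hmax⟩ := exists_max_image S p hS
    have hcard : (bhRejections c p : ℝ) ≤ #{j | p j ≤ p i} := by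
      rw [← card_filter_le_bhRejections_mul_eq hc]
      exact_mod_cast Finset.card_le_card fun j hj => by simpa using hmax j hj
    exact ⟨i, (mem_filter.mp hiS).2.trans (mul_le_mul_of_nonneg_right hcard hc)⟩

variable [DecidableEq ι]

lemma card_filter_eq_card_filter_ne_add_one {i : ι} {t : ℝ} (hi : p i ≤ t) :
    #{j | p j ≤ t} = #{j | j ≠ i ∧ p j ≤ t} + 1 := by
  rw [← card_erase_add_one (mem_filter.mpr ⟨Finset.mem_univ i, hi⟩)]
  congr 2
  ext j
  simp

lemma bhRejections_eq_iff_bhRejectionsForced_eq (hc : 0 ≤ c) {i : ι} {k : ℕ}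
    (hi : p i ≤ k * c) : bhRejections c p = k ↔ bhRejectionsForced c p i = k := by
  refine Nat.findGreatest_eq_iff_of_forall_le fun l hkl => ?_
  rw [card_filter_eq_card_filter_ne_add_one (hi.trans (by gcongr))]

lemma bhRejectionsForced_pos (i : ι) : 0 < bhRejectionsForced c p i :=
  Nat.le_findGreatest (Fintype.card_pos_iff.mpr ⟨i⟩) (by simp)

lemma bhRejectionsForced_le_card (i : ι) : bhRejectionsForced c p i ≤ Fintype.card ι :=
  Nat.findGreatest_le _

lemma bhRejectionsForced_update (i : ι) (x : ℝ) :
    bhRejectionsForced c (Function.update p i x) i = bhRejectionsForced c p i := by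
  unfold bhRejectionsForced
  congr! 4 with k
  exact congrArg card <| filter_congr fun j _ => and_congr_right fun hj => by
    rw [Function.update_of_ne hj]

end Combinatorics

section FullNull

variable {Ω ι : Type*} [MeasurableSpace Ω] {μ : Measure Ω} [Fintype ι] {P : ι → Ω → ℝ} {c : ℝ}

lemma measurable_bhRejections (c : ℝ) : Measurable (bhRejections (ι := ι) c) :=
  measurable_findGreatest fun _ _ => measurable_card_filter
    (fun j => measurableSet_le (measurable_pi_apply j) measurable_const) measurableSet_Ici

lemma measurable_bhRejectionsForced [DecidableEq ι] (c : ℝ) (i : ι) :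
    Measurable fun p : ι → ℝ => bhRejectionsForced c p i :=
  measurable_findGreatest fun k _ =>
    measurable_card_filter (q := fun j (p : ι → ℝ) => j ≠ i ∧ p j ≤ k * c)
    (fun j => (MeasurableSet.const (j ≠ i)).inter
      (measurableSet_le (measurable_pi_apply j) measurable_const))
    (MeasurableSet.of_discrete (s := {n | k ≤ n + 1}))

variable [DecidableEq ι]

lemma measure_bhRejections_eq (hP : ∀ i, Measurable (P i)) (hind : iIndepFun P μ)
    (hunif : ∀ i, μ.map (P i) = volume.restrict (Ioo 0 1)) (hc : 0 ≤ c)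
    (hnc : Fintype.card ι * c ≤ 1) {k : ℕ} (hk0 : k ≠ 0) (hkn : k ≤ Fintype.card ι) :
    μ {ω | bhRejections c (P · ω) = k}
      = ENNReal.ofReal c * ∑ i, μ {ω | bhRejectionsForced c (P · ω) i = k} := by
  have hPvec : Measurable fun ω i => P i ω := measurable_pi_lambda _ hP
  have hRk : MeasurableSet {ω | bhRejections c (P · ω) = k} :=
    (measurable_bhRejections c).comp hPvec (measurableSet_singleton k)
  have hkc : k * c ≤ 1 := le_trans (by gcongr) hnc
  have key : (k : ENNReal) * μ {ω | bhRejections c (P · ω) = k}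
      = k * (ENNReal.ofReal c * ∑ i, μ {ω | bhRejectionsForced c (P · ω) i = k}) := calc
    _ = ∑ i, μ ({ω | P i ω ≤ k * c} ∩ {ω | bhRejections c (P · ω) = k}) :=
        (sum_measure_inter_of_card_eq μ (fun i => measurableSet_le (hP i) measurable_const) hRk
          fun ω (hω : bhRejections c (P · ω) = k) => by
            simpa only [mem_ofPred_eq, hω] using
              card_filter_le_bhRejections_mul_eq (p := (P · ω)) hc).symm
    _ = ∑ i, μ ({ω | P i ω ≤ k * c} ∩ {ω | bhRejectionsForced c (P · ω) i = k}) := by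
        refine sum_congr rfl fun i _ => congrArg μ (Set.ext fun ω => and_congr_right fun hi => ?_)
        exact bhRejections_eq_iff_bhRejectionsForced_eq hc hi
    _ = ∑ i, ENNReal.ofReal (k * c) * μ {ω | bhRejectionsForced c (P · ω) i = k} := by
        refine sum_congr rfl fun i _ => ?_
        rw [← measure_le_of_map_eq_uniform (hP i) (hunif i) hkc]
        exact (hind.indepFun_of_update_invariant hP (measurable_bhRejectionsForced c i)
          (fun p x => bhRejectionsForced_update i x)).measure_inter_preimage_eq_mul _ _
          measurableSet_Iic (measurableSet_singleton k)
    _ = _ := by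
        rw [← mul_sum, ENNReal.ofReal_mul (Nat.cast_nonneg k), ENNReal.ofReal_natCast, mul_assoc]
  exact (ENNReal.mul_right_inj (Nat.cast_ne_zero.mpr hk0) (ENNReal.natCast_ne_top k)).mp key

theorem measure_bhRejections_pos [IsProbabilityMeasure μ] (hP : ∀ i, Measurable (P i))
    (hind : iIndepFun P μ) (hunif : ∀ i, μ.map (P i) = volume.restrict (Ioo 0 1))
    (hc : 0 ≤ c) (hnc : Fintype.card ι * c ≤ 1) :
    μ {ω | 0 < bhRejections c (P · ω)} = Fintype.card ι * ENNReal.ofReal c := by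
  have hPvec : Measurable fun ω i => P i ω := measurable_pi_lambda _ hP
  set n := Fintype.card ι
  have hR : Measurable fun ω => bhRejections c (P · ω) := (measurable_bhRejections c).comp hPvec
  have hpos : {ω | 0 < bhRejections c (P · ω)}
      = (fun ω => bhRejections c (P · ω)) ⁻¹' ↑(Finset.Icc 1 n) := by
    ext ω
    simp only [Set.mem_preimage, coe_Icc, Set.mem_Icc, mem_ofPred_eq]
    exact ⟨fun h => ⟨h, bhRejections_le_card⟩, And.left⟩
  have hforced (i : ι) :
      (fun ω => bhRejectionsForced c (P · ω) i) ⁻¹' ↑(Finset.Icc 1 n) = Set.univ :=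
    eq_univ_of_forall fun _ =>
      mem_coe.mpr (Finset.mem_Icc.mpr ⟨bhRejectionsForced_pos i, bhRejectionsForced_le_card i⟩)
  have hfiber (i : ι) : ∑ k ∈ Finset.Icc 1 n, μ {ω | bhRejectionsForced c (P · ω) i = k} = 1 :=
    (sum_measure_preimage_singleton (f := fun ω => bhRejectionsForced c (P · ω) i) _
      fun k _ => ((measurable_bhRejectionsForced c i).comp hPvec)
      (measurableSet_singleton k)).trans (by rw [hforced, measure_univ])
  calc μ {ω | 0 < bhRejections c (P · ω)}
      = ∑ k ∈ Finset.Icc 1 n, μ {ω | bhRejections c (P · ω) = k} := by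
        rw [hpos, ← sum_measure_preimage_singleton _ fun k _ => hR (measurableSet_singleton k)]
        rfl
    _ = ∑ k ∈ Finset.Icc 1 n,
          ENNReal.ofReal c * ∑ i, μ {ω | bhRejectionsForced c (P · ω) i = k} :=
        sum_congr rfl fun k hk => measure_bhRejections_eq hP hind hunif hc hnc
          (Nat.one_le_iff_ne_zero.mp (Finset.mem_Icc.mp hk).1) (Finset.mem_Icc.mp hk).2
    _ = ENNReal.ofReal c * ∑ i, ∑ k ∈ Finset.Icc 1 n,
          μ {ω | bhRejectionsForced c (P · ω) i = k} := by rw [← mul_sum, sum_comm]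
    _ = n * ENNReal.ofReal c := by
        rw [sum_congr rfl fun i _ => hfiber i, sum_const, card_univ, nsmul_one, mul_comm]

end FullNull

/-- FDR of BH under the full null, Benjamini–Yekutieli Thm 5.1 special case:
if all `m` nulls are true and the p-values are i.i.d. `Uniform(0,1)`, then the FDR of the
level-`α` BH procedure, which equals `P(∃ i : P₍ᵢ₎ ≤ iα/m)`, is exactly `α`.
(Here `P₍ᵢ₎ ≤ iα/m` for some `i` is expressed as `∃ i, Pᵢ ≤ #{j : Pⱼ ≤ Pᵢ}·α/m`.) -/
theorem bh_fdr_full_null_uniform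
    {Ω : Type*} [MeasurableSpace Ω] (μ : Measure Ω) [IsProbabilityMeasure μ]
    (m : ℕ) (hm : 0 < m) (α : ℝ) (hα : α ∈ Ioo (0:ℝ) 1)
    (P : Fin m → Ω → ℝ) (hP : ∀ i, Measurable (P i))
    (hindep : iIndepFun P μ)
    (hunif : ∀ i, Measure.map (P i) μ = volume.restrict (Set.Ioo (0:ℝ) 1)) :
    μ {ω | ∃ i : Fin m, P i ω ≤
        ((Finset.univ.filter fun j => P j ω ≤ P i ω).card : ℝ) * α / m}
      = ENNReal.ofReal α := by
  have hm' : (m : ℝ) ≠ 0 := Nat.cast_ne_zero.mpr hm.ne'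
  have hc : 0 ≤ α / m := div_nonneg hα.1.le (Nat.cast_nonneg m)
  have hmc : Fintype.card (Fin m) * (α / m) = α := by rw [Fintype.card_fin, mul_div_cancel₀ _ hm']
  have hevent : {ω | ∃ i : Fin m, P i ω ≤ (#{j | P j ω ≤ P i ω} : ℝ) * α / m}
      = {ω | 0 < bhRejections (α / m) (P · ω)} := by
    ext ω
    simp only [mem_ofPred_eq, mul_div_assoc]
    exact exists_le_card_filter_mul_iff_bhRejections_pos hc
  rw [hevent, measure_bhRejections_pos hP hindep hunif hc (hmc.trans_le hα.2.le),
    ← ENNReal.ofReal_natCast, ← ENNReal.ofReal_mul (Nat.cast_nonneg _), hmc]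
end
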